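/- The Hermite function of degree -1 satisfies (2/√π) · H_{-1}(z) = exp(z²) · Erfc(z) for all complex z, where Erfc is the complementary error function. -/

import Mathlib

open MeasureTheory Real Complex

/-- Kummer's confluent hypergeometric function `Φ(a,b,z) = ₁F₁(a;b;z)`. -/
noncomputable def kummerPhi (a b z : ℂ) : ℂ :=
  ∑' n : ℕ, ((ascPochhammer ℂ n).eval a / (ascPochhammer ℂ n).eval b) * z ^ n / n.factorial

/-- The Hermite function `H_μ` of complex degree `μ`. -/
noncomputable def hermiteF (μ z : ℂ) : ℂ :=
  (2 : ℂ) ^ μ * Complex.Gamma (1 / 2) / Complex.Gamma ((1 - μ) / 2) *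
      kummerPhi (-μ / 2) (1 / 2) (z ^ 2) +
    z * ((2 : ℂ) ^ μ * Complex.Gamma (-(1 : ℂ) / 2) / Complex.Gamma (-μ / 2)) *
      kummerPhi ((1 - μ) / 2) (3 / 2) (z ^ 2)

/-- The complementary error function, as an entire function on `ℂ`:
`Erfc z = 1 - (2/√π) ∫₀^z e^{-s²} ds`, the integral taken along the segment
from `0` to `z` (parametrized by `s = t·z`, `t ∈ [0,1]`). -/
noncomputable def erfcC (z : ℂ) : ℂ :=
  1 - 2 / Real.sqrt π * ∫ t in (0 : ℝ)..1, z * Complex.exp (-(t * z) ^ 2)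


lemma ascP_cast (r : ℝ) (n : ℕ) :
    (ascPochhammer ℂ n).eval (r : ℂ) = Complex.ofReal ((ascPochhammer ℝ n).eval r) := by
  induction n with
  | zero => simp
  | succ n ih => rw [ascPochhammer_succ_eval, ascPochhammer_succ_eval, ih]; push_cast; ring

lemma ascP_pos (r : ℝ) (hr : 0 < r) (n : ℕ) : (0:ℝ) < (ascPochhammer ℝ n).eval r := by
  induction n with
  | zero => simp
  | succ n ih => rw [ascPochhammer_succ_eval]; positivity

lemma ascP_fact_le (n : ℕ) : (n.factorial : ℝ) ≤ (ascPochhammer ℝ n).eval (3/2) := by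
  induction n with
  | zero => simp
  | succ n ih =>
    rw [ascPochhammer_succ_eval, Nat.factorial_succ]
    push_cast
    calc ((n:ℝ)+1) * n.factorial ≤ (3/2 + n) * (ascPochhammer ℝ n).eval (3/2) := by
          apply mul_le_mul (by linarith) ih (by positivity) (by linarith [Nat.cast_nonneg (α := ℝ) n])
      _ = _ := mul_comm _ _

lemma summable_aux (c : ℝ) (hc : 0 ≤ c) : Summable (fun n : ℕ => (2*n+1 : ℝ) * c^n / n.factorial) := by
  refine Summable.of_nonneg_of_le (fun n => by positivity) (fun n => ?_)
    ((Real.summable_pow_div_factorial (2*c)).mul_left 3)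
  have h : (2*n+1 : ℝ) ≤ 2^n * 3 := by
    induction n with
    | zero => norm_num
    | succ n ih =>
      push_cast; rw [pow_succ]; push_cast at ih
      have h1 : (1:ℝ) ≤ 2^n := one_le_pow₀ (by norm_num)
      linarith
  have hf : (0:ℝ) < n.factorial := by positivity
  rw [mul_pow, ← mul_div_assoc, div_le_div_iff_of_pos_right hf]
  calc (2*n+1 : ℝ) * c^n ≤ (2^n * 3) * c^n := mul_le_mul_of_nonneg_right h (pow_nonneg hc n)
    _ = 3 * (2^n * c^n) := by ring

lemma key (z : ℂ) :
    ∑' n : ℕ, z ^ (2*n+1) / (ascPochhammer ℂ n).eval (3/2) =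
      Complex.exp (z ^ 2) * ∫ t in (0:ℝ)..1, z * Complex.exp (-((t:ℝ) * z) ^ 2) := by
  set P : ℕ → ℂ := fun n => (ascPochhammer ℂ n).eval (3/2) with hPdef
  have hPcast : ∀ n, P n = Complex.ofReal ((ascPochhammer ℝ n).eval (3/2)) := by
    intro n
    have := ascP_cast (3/2) n
    simpa [hPdef] using this
  have hPpos : ∀ n, (0:ℝ) < (ascPochhammer ℝ n).eval (3/2) := ascP_pos _ (by norm_num)
  have hPne : ∀ n, P n ≠ 0 := fun n => by
    rw [hPcast n]; exact_mod_cast (hPpos n).ne'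
  have hPnorm : ∀ n, (n.factorial : ℝ) ≤ ‖P n‖ := fun n => by
    rw [hPcast n, Complex.norm_real, Real.norm_of_nonneg (hPpos n).le]
    exact ascP_fact_le n
  -- the functions
  set g : ℕ → ℝ → ℂ := fun n x => ((x:ℂ) * z) ^ (2*n+1) / P n with hgdef
  set g' : ℕ → ℝ → ℂ := fun n x => ((2*n+1 : ℕ) : ℂ) * ((x:ℂ) * z) ^ (2*n) * z / P n with hg'def
  have hlin : ∀ x : ℝ, HasDerivAt (fun x : ℝ => (x:ℂ) * z) z x := fun x => by
    simpa using (Complex.ofRealCLM.hasDerivAt (x := x)).mul_const z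
  have hg : ∀ n (x : ℝ), HasDerivAt (g n) (g' n x) x := by
    intro n x
    have hf : HasDerivAt (fun w : ℂ => (w * z) ^ (2*n+1) / P n)
        (((2*n+1 : ℕ) : ℂ) * (((x:ℂ)) * z) ^ (2*n) * z / P n) ((x:ℂ)) := by
      have := (((hasDerivAt_id ((x:ℂ))).mul_const z).pow (2*n+1)).div_const (P n)
      simpa [Nat.add_sub_cancel, mul_one] using this
    exact hf.comp_ofReal
  have hgnorm : ∀ n (x : ℝ), ‖g' n x‖ ≤ (2*n+1 : ℝ) * ((|x| * ‖z‖)^2)^n / n.factorial * ‖z‖ := by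
    intro n x
    have h1 : ‖g' n x‖ = ((2*n+1 : ℕ) : ℝ) * (|x| * ‖z‖)^(2*n) * ‖z‖ / ‖P n‖ := by
      simp only [hg'def, norm_div, norm_mul, norm_pow, Complex.norm_natCast,
        Complex.norm_real, Real.norm_eq_abs]
    rw [h1, ← pow_mul]
    rw [div_mul_eq_mul_div]
    push_cast
    gcongr
    exact hPnorm n
  -- summability of the bound on a ball of radius Rb
  have hsum_bound : ∀ Rb : ℝ, 0 ≤ Rb →
      Summable (fun n : ℕ => (2*n+1 : ℝ) * ((Rb * ‖z‖)^2)^n / n.factorial * ‖z‖) :=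
    fun Rb hRb => (summable_aux ((Rb * ‖z‖)^2) (by positivity)).mul_right ‖z‖
  have hg0 : ∀ n, g n 0 = 0 := by
    intro n; simp [hgdef]
  -- derivative of the sum L
  set L : ℝ → ℂ := fun x => ∑' n, g n x with hLdef
  have hL : ∀ x : ℝ, HasDerivAt L (∑' n, g' n x) x := by
    intro x
    set Rb : ℝ := |x| + 1 with hRb
    have hxmem : x ∈ Set.Ioo (-Rb) Rb :=
      Set.mem_Ioo.mpr (abs_lt.mp (lt_add_one _))
    have h0mem : (0:ℝ) ∈ Set.Ioo (-Rb) Rb :=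
      Set.mem_Ioo.mpr (abs_lt.mp (by rw [abs_zero, hRb]; positivity))
    refine hasDerivAt_tsum_of_isPreconnected (hsum_bound Rb (by positivity)) isOpen_Ioo
      (convex_Ioo _ _).isPreconnected (fun n y _ => hg n y) (fun n y hy => ?_) h0mem ?_ hxmem
    · refine le_trans (hgnorm n y) ?_
      have hyb : |y| ≤ Rb := by
        rcases hy with ⟨h1, h2⟩
        cases abs_cases y <;> linarith
      gcongr
    · simp only [hg0]; exact summable_zero
  -- summability of derivative series at each x and the recurrence
  have hg'sum : ∀ x : ℝ, Summable (fun n => g' n x) := by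
    intro x
    refine Summable.of_norm_bounded (hsum_bound |x| (abs_nonneg x)) (fun n => hgnorm n x)
  have hrec : ∀ x : ℝ, (∑' n, g' n x) = z + 2 * (x:ℂ) * z^2 * L x := by
    intro x
    rw [Summable.tsum_eq_zero_add (hg'sum x)]
    have h0 : g' 0 x = z := by simp [hg'def, hPdef]
    have hsucc : ∀ n : ℕ, g' (n+1) x = 2 * (x:ℂ) * z^2 * g n x := by
      intro n
      have hPsucc : P (n+1) = P n * (3/2 + n) := by
        simp [hPdef, ascPochhammer_succ_eval]
      have hne2 : (3/2 + (n:ℂ)) ≠ 0 := by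
        have : ((3/2 + n : ℝ) : ℂ) ≠ 0 := by
          exact_mod_cast (by positivity : (0:ℝ) < 3/2 + n).ne'
        simpa using this
      simp only [hg'def, hgdef, hPsucc]
      have hcast : ((2*(n+1)+1 : ℕ) : ℂ) = 2 * (3/2 + (n:ℂ)) := by push_cast; ring
      have hpow : ((x:ℂ) * z) ^ (2*(n+1)) = ((x:ℂ) * z) ^ (2*n+1) * ((x:ℂ) * z) := by
        rw [show 2*(n+1) = 2*n+1+1 from by ring, pow_succ]
      rw [hcast, hpow, mul_div_assoc']
      rw [div_eq_div_iff (mul_ne_zero (hPne n) hne2) (hPne n)]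
      ring
    simp only [hsucc, h0]
    rw [tsum_mul_left]
  -- the integral side
  have hcont : Continuous (fun t : ℝ => z * Complex.exp (-((t:ℝ) * z) ^ 2)) := by
    fun_prop
  set G : ℝ → ℂ := fun x => ∫ t in (0:ℝ)..x, z * Complex.exp (-((t:ℝ) * z) ^ 2) with hGdef
  have hG : ∀ x : ℝ, HasDerivAt G (z * Complex.exp (-((x:ℂ) * z) ^ 2)) x := by
    intro x
    exact intervalIntegral.integral_hasDerivAt_right (hcont.intervalIntegrable _ _)
      (hcont.stronglyMeasurableAtFilter _ _) hcont.continuousAt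
  set R : ℝ → ℂ := fun x => Complex.exp (((x:ℂ) * z) ^ 2) * G x with hRdef
  have hsq : ∀ x : ℝ, HasDerivAt (fun x : ℝ => ((x:ℂ) * z) ^ 2) (2 * ((x:ℂ)*z) * z) x := by
    intro x
    have hf : HasDerivAt (fun w : ℂ => (w * z) ^ 2) (2 * (((x:ℂ)) * z) * z) ((x:ℂ)) := by
      have := ((hasDerivAt_id ((x:ℂ))).mul_const z).pow 2
      simpa [mul_one, Pi.pow_def] using this
    exact hf.comp_ofReal
  have hR : ∀ x : ℝ, HasDerivAt R (2 * (x:ℂ) * z^2 * R x + z) x := by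
    intro x
    have hE : HasDerivAt (fun x : ℝ => Complex.exp (((x:ℂ) * z) ^ 2))
        (Complex.exp (((x:ℂ) * z) ^ 2) * (2 * ((x:ℂ)*z) * z)) x := (hsq x).cexp
    have := hE.mul (hG x)
    have hcancel : Complex.exp (((x:ℂ) * z) ^ 2) * Complex.exp (-((x:ℂ) * z) ^ 2) = 1 := by
      rw [← Complex.exp_add]; simp
    convert this using 1
    · rfl
    · rfl
    simp only [hRdef]
    calc 2 * (x:ℂ) * z^2 * (Complex.exp (((x:ℂ) * z) ^ 2) * G x) + z
        = Complex.exp (((x:ℂ)*z)^2) * (2 * ((x:ℂ)*z) * z) * G x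
          + (Complex.exp (((x:ℂ)*z)^2) * Complex.exp (-((x:ℂ)*z)^2)) * z := by rw [hcancel]; ring
      _ = _ := by ring
  -- the difference and the vanishing derivative
  set w : ℝ → ℂ := fun x => Complex.exp (-((x:ℂ) * z) ^ 2) * (L x - R x) with hwdef
  have hw : ∀ x : ℝ, HasDerivAt w 0 x := by
    intro x
    have hD : HasDerivAt (fun x => L x - R x) (2 * (x:ℂ) * z^2 * (L x - R x)) x := by
      have := (hL x).sub (hR x)
      rw [hrec x] at this
      convert this using 1
      · rfl
      · rfl
      ring
    have hneg : HasDerivAt (fun x : ℝ => Complex.exp (-((x:ℂ) * z) ^ 2))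
        (Complex.exp (-((x:ℂ) * z) ^ 2) * (-(2 * ((x:ℂ)*z) * z))) x := (hsq x).neg.cexp
    have := hneg.mul hD
    convert this using 1
    · rfl
    · rfl
    ring
  have hwconst : w 1 = w 0 := by
    have hdiff : Differentiable ℝ w := fun x => (hw x).differentiableAt
    exact is_const_of_deriv_eq_zero hdiff (fun x => (hw x).deriv) 1 0
  have hL0 : L 0 = 0 := by simp [hLdef, hg0]
  have hR0 : R 0 = 0 := by simp [hRdef, hGdef]
  have hw0 : w 0 = 0 := by simp [hwdef, hL0, hR0]
  have hw1 : w 1 = 0 := hwconst.trans hw0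
  have hexpne : Complex.exp (-((1:ℂ) * z) ^ 2) ≠ 0 := Complex.exp_ne_zero _
  have hLR : L 1 = R 1 := by
    have := hw1
    simp only [hwdef, Complex.ofReal_one] at this
    rcases mul_eq_zero.mp this with h | h
    · exact absurd h hexpne
    · exact sub_eq_zero.mp h
  have hL1 : L 1 = ∑' n : ℕ, z ^ (2*n+1) / P n := by
    simp [hLdef, hgdef]
  have hR1 : R 1 = Complex.exp (z ^ 2) * ∫ t in (0:ℝ)..1, z * Complex.exp (-((t:ℝ) * z) ^ 2) := by
    simp [hRdef, hGdef]
  rw [← hL1, ← hR1, hLR]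

lemma kummer_half_half (w : ℂ) : (∑' n : ℕ, ((ascPochhammer ℂ n).eval (1/2) / (ascPochhammer ℂ n).eval (1/2)) * w ^ n / n.factorial) = Complex.exp w := by
  have hne : ∀ n : ℕ, (ascPochhammer ℂ n).eval (1/2 : ℂ) ≠ 0 := by
    intro n
    rw [show ((1:ℂ)/2) = (((1/2 : ℝ)) : ℂ) from by norm_num, ascP_cast]
    exact_mod_cast (ascP_pos (1/2) (by norm_num) n).ne'
  rw [Complex.exp_eq_exp_ℂ, NormedSpace.exp_eq_tsum_div]
  congr 1; funext n
  rw [div_self (hne n), one_mul]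

lemma kummer_one_threehalf (z : ℂ) :
    z * (∑' n : ℕ, ((ascPochhammer ℂ n).eval 1 / (ascPochhammer ℂ n).eval (3/2)) * (z^2) ^ n / n.factorial)
      = ∑' n : ℕ, z ^ (2*n+1) / (ascPochhammer ℂ n).eval (3/2) := by
  rw [← tsum_mul_left]
  congr 1; funext n
  have hPne : (ascPochhammer ℂ n).eval (3/2 : ℂ) ≠ 0 := by
    rw [show ((3:ℂ)/2) = (((3/2 : ℝ)) : ℂ) from by norm_num, ascP_cast]
    exact_mod_cast (ascP_pos (3/2) (by norm_num) n).ne'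
  have hf : ((n.factorial : ℂ)) ≠ 0 := by exact_mod_cast n.factorial_ne_zero
  rw [ascPochhammer_eval_one, show z ^ (2*n+1) = (z^2)^n * z from by rw [pow_succ, pow_mul]]
  field_simp

/-- `(2/√π)·H_{-1}(z) = exp(z²)·Erfc(z)`. -/
theorem hermiteF_neg_one_eq_erfc (z : ℂ) :
    2 / Real.sqrt π * hermiteF (-1) z = Complex.exp (z ^ 2) * erfcC z := by
  simp only [hermiteF, erfcC, kummerPhi]
  have hsπ : ((Real.sqrt π : ℝ) : ℂ) ≠ 0 := by
    exact_mod_cast (Real.sqrt_pos.mpr Real.pi_pos).ne'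
  have hΓhalf : Complex.Gamma (1/2) = ((Real.sqrt π : ℝ) : ℂ) := by
    rw [Complex.Gamma_one_half_eq, show ((1:ℂ)/2) = (((1/2:ℝ)):ℂ) from by norm_num,
      ← Complex.ofReal_cpow Real.pi_pos.le, Real.sqrt_eq_rpow]
  have hΓneg : Complex.Gamma (-(1:ℂ)/2) = -2 * ((Real.sqrt π : ℝ) : ℂ) := by
    have h := Complex.Gamma_add_one (-(1:ℂ)/2) (by norm_num)
    rw [show (-(1:ℂ)/2 + 1) = 1/2 from by norm_num, hΓhalf] at h
    linear_combination (2 : ℂ) * h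
  have hpow : (2:ℂ) ^ (-1:ℂ) = 1/2 := by
    rw [Complex.cpow_neg, Complex.cpow_one]; norm_num
  rw [show (-(-1:ℂ)/2) = 1/2 from by norm_num, show ((1 - (-1:ℂ))/2) = 1 from by norm_num,
    hpow, hΓhalf, hΓneg, Complex.Gamma_one, kummer_half_half]
  have hzΦ := (kummer_one_threehalf z).trans (key z)
  have lhs_eq : 2 / ((Real.sqrt π : ℝ) : ℂ) * (1/2 * ((Real.sqrt π : ℝ) : ℂ) / 1 * Complex.exp (z^2) +
      z * (1/2 * (-2 * ((Real.sqrt π : ℝ) : ℂ)) / ((Real.sqrt π : ℝ) : ℂ)) *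
        (∑' n : ℕ, ((ascPochhammer ℂ n).eval 1 / (ascPochhammer ℂ n).eval (3/2)) * (z^2) ^ n / n.factorial)) =
      Complex.exp (z^2) - 2 / ((Real.sqrt π : ℝ) : ℂ) *
        (z * (∑' n : ℕ, ((ascPochhammer ℂ n).eval 1 / (ascPochhammer ℂ n).eval (3/2)) * (z^2) ^ n / n.factorial)) := by
    field_simp
    ring
  rw [lhs_eq, hzΦ]
  ring
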